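/- arXiv:math/0206246 — 6 statements merged into one kernel-verified Lean document; each statement's English description precedes it below -/
import Mathlib

section
/- Two words u and v over a totally ordered alphabet satisfy P(u) = P(v) if and only if u and v are congruent modulo the sylvester relations, i.e., modulo the congruence on the free monoid generated by the relations z x u y ≡ x z u y for all letters x ≤ y < z and all words u. -/
namespace Sylv

variable {α : Type*}

/-- Insert a letter into a binary search tree: left on `≤`, right on `>`. -/
def insert [LinearOrder α] (x : α) : BinaryTree α → BinaryTree α
  | BinaryTree.nil => BinaryTree.node x BinaryTree.nil BinaryTree.nil
  | BinaryTree.node a l r =>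
      if x ≤ a then BinaryTree.node a (Sylv.insert x l) r else BinaryTree.node a l (Sylv.insert x r)

/-- The binary search tree `P(w)`, inserting the letters of `w` from right to left. -/
def P [LinearOrder α] (w : List α) : BinaryTree α := w.foldr Sylv.insert BinaryTree.nil

/-- Infix (in-order) reading of a labelled binary tree. -/
def inorder : BinaryTree α → List α
  | BinaryTree.nil => []
  | BinaryTree.node a l r => inorder l ++ a :: inorder r

/-- Postfix (post-order) reading of a labelled binary tree. -/
def postorder : BinaryTree α → List α
  | BinaryTree.nil => []
  | BinaryTree.node a l r => postorder l ++ postorder r ++ [a]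

/-- Binary search tree property: left labels `≤` root, right labels `>` root. -/
def IsBST [LinearOrder α] : BinaryTree α → Prop
  | BinaryTree.nil => True
  | BinaryTree.node a l r =>
      (∀ x ∈ inorder l, x ≤ a) ∧ (∀ x ∈ inorder r, a < x) ∧ IsBST l ∧ IsBST r

/-- Shape (underlying unlabelled tree). -/
def shape : BinaryTree α → BinaryTree Unit
  | BinaryTree.nil => BinaryTree.nil
  | BinaryTree.node _ l r => BinaryTree.node () (shape l) (shape r)

/-- The sylvester congruence: the monoid congruence generated by
`z x u y ≡ x z u y` for letters `x ≤ y < z` and a word `u`. -/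
inductive SylvCong [LinearOrder α] : List α → List α → Prop
  | rel (p u q : List α) (x y z : α) (hxy : x ≤ y) (hyz : y < z) :
      SylvCong (p ++ z :: x :: u ++ y :: q) (p ++ x :: z :: u ++ y :: q)
  | refl (w : List α) : SylvCong w w
  | symm {u v} : SylvCong u v → SylvCong v u
  | trans {u v w} : SylvCong u v → SylvCong v w → SylvCong u w

/-- One rewriting step `x z u y → z x u y` (with `x ≤ y < z`), in any context. -/
inductive SylvStep [LinearOrder α] : List α → List α → Prop
  | step (p u q : List α) (x y z : α) (hxy : x ≤ y) (hyz : y < z) :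
      SylvStep (p ++ x :: z :: u ++ y :: q) (p ++ z :: x :: u ++ y :: q)

/-- Standardization of a word: values in `1..n`. -/
def std [LinearOrder α] [Inhabited α] (w : List α) : List ℕ :=
  (List.range w.length).map (fun i =>
    ((List.range w.length).filter (fun j =>
      w.getD j default < w.getD i default ∨
        (w.getD j default = w.getD i default ∧ j < i))).length + 1)

/-- Inverse of a permutation word of `1..n`. -/
def invPerm (s : List ℕ) : List ℕ :=
  (List.range s.length).map (fun j => s.idxOf (j + 1) + 1)

/-- `w` is a permutation word of `{1,…,n}`. -/
def IsPermWord (n : ℕ) (w : List ℕ) : Prop := w.Perm (List.range' 1 n)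

/-- Decreasing tree: every node's label exceeds all labels in its subtrees. -/
def IsDecreasing : BinaryTree ℕ → Prop
  | BinaryTree.nil => True
  | BinaryTree.node a l r =>
      (∀ x ∈ inorder l, x < a) ∧ (∀ x ∈ inorder r, x < a) ∧ IsDecreasing l ∧ IsDecreasing r

/-- `t` is the decreasing tree of the word `w` (unique when letters are distinct). -/
def IsDecrTreeOf (w : List ℕ) (t : BinaryTree ℕ) : Prop := IsDecreasing t ∧ inorder t = w

/-- Label the nodes of an unlabelled tree in infix order, starting from `k`. -/
def labelFrom : BinaryTree Unit → ℕ → BinaryTree ℕ × ℕ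
  | BinaryTree.nil, k => (BinaryTree.nil, k)
  | BinaryTree.node _ l r, k =>
      let p := labelFrom l k
      let q := labelFrom r (p.2 + 1)
      (BinaryTree.node p.2 p.1 q.1, q.2)

/-- The canonical tree-word `w_T`: postfix reading of `T` labelled in infix order by `1..n`. -/
def treeWord (T : BinaryTree Unit) : List ℕ := postorder (labelFrom T 1).1

/-- Shift all letters of a word by `k`. -/
def shift (k : ℕ) (w : List ℕ) : List ℕ := w.map (· + k)

/-- `IsShuffle u v w` : `w` appears in the shuffle product `u ⧢ v`. -/
inductive IsShuffle : List ℕ → List ℕ → List ℕ → Prop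
  | nil : IsShuffle [] [] []
  | left (a : ℕ) {u v w} : IsShuffle u v w → IsShuffle (a :: u) v (a :: w)
  | right (a : ℕ) {u v w} : IsShuffle u v w → IsShuffle u (a :: v) (a :: w)

/-- A model of the homogeneous components of `FQSym`: formal series on words,
encoded by their coefficient functions. -/
abbrev FQS := List ℕ → ℚ

/-- Product of noncommutative series: convolution over factorizations. -/
noncomputable def mulF (f g : FQS) : FQS := fun w =>
  ∑ i ∈ Finset.range (w.length + 1), f (w.take i) * g (w.drop i)

open Classical in
/-- `F_σ = ∑_{std w = σ⁻¹} w`. -/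
noncomputable def Fel (σ : List ℕ) : FQS := fun w =>
  if std w = invPerm σ then 1 else 0

open Classical in
/-- `P_T = ∑_{P(σ) = T} F_σ`. -/
noncomputable def Pel (T : BinaryTree Unit) : FQS := fun w =>
  if ∃ σ, IsPermWord w.length σ ∧ shape (P σ) = T ∧ std w = invPerm σ then 1 else 0

/-- Inversions (by values) of a permutation word. -/
def InvV (w : List ℕ) : Set (ℕ × ℕ) :=
  {p | p.1 < p.2 ∧ p.1 ∈ w ∧ p.2 ∈ w ∧ w.idxOf p.2 < w.idxOf p.1}

/-- Right weak order on permutation words: inclusion of inversion sets. -/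
def weakLe (u v : List ℕ) : Prop := InvV u ⊆ InvV v

/-- Product of hook lengths of a binary tree. -/
def hookProd : BinaryTree Unit → ℕ
  | BinaryTree.nil => 1
  | BinaryTree.node _ l r => (l.numNodes + r.numNodes + 1) * hookProd l * hookProd r

/-- Major index of a word: sum of descent positions (1-based). -/
def maj (w : List ℕ) : ℕ :=
  ∑ i ∈ Finset.range (w.length - 1),
    if w.getD (i + 1) 0 < w.getD i 0 then i + 1 else 0

/-- `[n]_q` as a polynomial. -/
noncomputable def qInt (n : ℕ) : Polynomial ℚ := ∑ i ∈ Finset.range n, Polynomial.X ^ i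

/-- `[n]_q!`. -/
noncomputable def qFact : ℕ → Polynomial ℚ
  | 0 => 1
  | n + 1 => qFact n * qInt (n + 1)

/-- `∏_{v ∈ T} q^{δ_v} [h_v]_q`. -/
noncomputable def qHook : BinaryTree Unit → Polynomial ℚ
  | BinaryTree.nil => 1
  | BinaryTree.node _ l r =>
      Polynomial.X ^ r.numNodes * qInt (l.numNodes + r.numNodes + 1) * qHook l * qHook r

end Sylv

namespace Sylv

section Aux
variable {α : Type*} [LinearOrder α]

theorem mem_inorder_insert {b a : α} {t : BinaryTree α} :
    b ∈ inorder (Sylv.insert a t) ↔ b = a ∨ b ∈ inorder t := by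
  induction t with
  | nil => simp [Sylv.insert, inorder]
  | node c l r ihl ihr =>
      by_cases h : a ≤ c <;>
        simp [Sylv.insert, inorder, h, ihl, ihr] <;> tauto

theorem isBST_insert {a : α} {t : BinaryTree α} (h : IsBST t) : IsBST (Sylv.insert a t) := by
  induction t with
  | nil => simp [Sylv.insert, IsBST, inorder]
  | node c l r ihl ihr =>
      obtain ⟨h1, h2, h3, h4⟩ := h
      by_cases hac : a ≤ c
      · simp only [Sylv.insert, if_pos hac, IsBST]
        refine ⟨?_, h2, ihl h3, h4⟩
        intro x hx
        rcases mem_inorder_insert.1 hx with rfl | hx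
        · exact hac
        · exact h1 x hx
      · simp only [Sylv.insert, if_neg hac, IsBST]
        refine ⟨h1, ?_, h3, ihr h4⟩
        intro x hx
        rcases mem_inorder_insert.1 hx with rfl | hx
        · exact lt_of_not_ge hac
        · exact h2 x hx

theorem isBST_P (w : List α) : IsBST (P w) := by
  induction w with
  | nil => trivial
  | cons a w ih => exact isBST_insert ih

theorem mem_inorder_P {b : α} {w : List α} : b ∈ inorder (P w) ↔ b ∈ w := by
  induction w with
  | nil => simp [P, inorder]
  | cons a w ih => simp [P, mem_inorder_insert, ih]; rw [← P]; simp [ih]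

theorem mem_postorder_iff {b : α} {t : BinaryTree α} : b ∈ postorder t ↔ b ∈ inorder t := by
  induction t with
  | nil => simp [postorder, inorder]
  | node c l r ihl ihr => simp [postorder, inorder, ihl, ihr]; tauto

/-- Key commutation lemma. -/
theorem insert_comm {x y z : α} {t : BinaryTree α} (ht : IsBST t) (hy : y ∈ inorder t)
    (hxy : x ≤ y) (hyz : y < z) :
    Sylv.insert z (Sylv.insert x t) = Sylv.insert x (Sylv.insert z t) := by
  induction t with
  | nil => simp [inorder] at hy
  | node a l r ihl ihr =>
      obtain ⟨h1, h2, h3, h4⟩ := ht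
      by_cases hxa : x ≤ a <;> by_cases hza : z ≤ a
      · -- both left
        have hyl : y ∈ inorder l := by
          simp [inorder] at hy
          rcases hy with hy | rfl | hy
          · exact hy
          · exact absurd hyz (not_lt.2 hza)
          · exact absurd ((h2 y hy).trans hyz) (not_lt.2 hza)
        simp [Sylv.insert, hxa, hza, ihl h3 hyl]
      · simp [Sylv.insert, hxa, hza]
      · exact absurd (hza.trans_lt (lt_of_not_ge hxa)) (not_lt.2 (hxy.trans hyz.le))
      · -- both right
        have hyr : y ∈ inorder r := by
          simp [inorder] at hy
          rcases hy with hy | rfl | hy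
          · exact absurd (hxy.trans (h1 y hy)) hxa
          · exact absurd hxy hxa
          · exact hy
        simp [Sylv.insert, hxa, hza, ihr h4 hyr]

theorem SylvCong.context {u v : List α} (h : SylvCong u v) (p q : List α) :
    SylvCong (p ++ u ++ q) (p ++ v ++ q) := by
  induction h with
  | rel p' u' q' x y z hxy hyz =>
      have := SylvCong.rel (p ++ p') u' (q' ++ q) x y z hxy hyz
      simpa using this
  | refl w => exact SylvCong.refl _
  | symm _ ih => exact ih.symm
  | trans _ _ ih1 ih2 => exact ih1.trans ih2

theorem SylvCong.cons {u v : List α} (a : α) (h : SylvCong u v) :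
    SylvCong (a :: u) (a :: v) := by
  have := h.context [a] []
  simpa using this

/-- Move `a` to the right across `s` (all letters of `s` are `≤ y < a`). -/
theorem move {a y : α} : ∀ (s : List α) (u q : List α), (∀ b ∈ s, b ≤ y) → y < a →
    SylvCong (a :: (s ++ u ++ y :: q)) (s ++ a :: (u ++ y :: q))
  | [], u, q, _, _ => SylvCong.refl _
  | b :: s, u, q, hs, hya => by
      have h1 : SylvCong (a :: b :: ((s ++ u) ++ y :: q)) (b :: a :: ((s ++ u) ++ y :: q)) :=
        by simpa using SylvCong.rel [] (s ++ u) q b y a (hs b (by simp)) hya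
      have h2 : SylvCong (a :: (s ++ u ++ y :: q)) (s ++ a :: (u ++ y :: q)) :=
        move s u q (fun c hc => hs c (by simp [hc])) hya
      have h3 := h2.cons b
      refine SylvCong.trans ?_ (by simpa using h3)
      simpa using h1

theorem cong_insert {a : α} {t : BinaryTree α} (ht : IsBST t) :
    SylvCong (a :: postorder t) (postorder (Sylv.insert a t)) := by
  induction t with
  | nil => exact SylvCong.refl _
  | node c l r ihl ihr =>
      obtain ⟨h1, h2, h3, h4⟩ := ht
      by_cases hac : a ≤ c
      · have h := (ihl h3).context [] (postorder r ++ [c])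
        simp only [Sylv.insert, hac, postorder]
        simpa [postorder] using h
      · have hca : c < a := lt_of_not_ge hac
        have hmov : SylvCong (a :: (postorder l ++ postorder r ++ c :: []))
            (postorder l ++ a :: (postorder r ++ c :: [])) := by
          refine move (postorder l) (postorder r) [] ?_ hca
          intro b hb
          exact h1 b (mem_postorder_iff.1 hb)
        have h := (ihr h4).context (postorder l) [c]
        simp only [Sylv.insert, hac, if_neg hac, postorder]
        refine SylvCong.trans (by simpa using hmov) ?_
        simpa [postorder] using h

theorem cong_canon (w : List α) : SylvCong w (postorder (P w)) := by
  induction w with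
  | nil => exact SylvCong.refl _
  | cons a w ih =>
      refine SylvCong.trans (ih.cons a) ?_
      exact cong_insert (isBST_P w)

theorem foldr_gt {c : α} {L R : BinaryTree α} : ∀ {w : List α}, (∀ b ∈ w, c < b) →
    List.foldr Sylv.insert (BinaryTree.node c L R) w = BinaryTree.node c L (List.foldr Sylv.insert R w)
  | [], _ => rfl
  | b :: w, h => by
      have := foldr_gt (L := L) (R := R) (w := w) (fun x hx => h x (by simp [hx]))
      simp [this, Sylv.insert, not_le.2 (h b (by simp))]

theorem foldr_le {c : α} {L R : BinaryTree α} : ∀ {w : List α}, (∀ b ∈ w, b ≤ c) →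
    List.foldr Sylv.insert (BinaryTree.node c L R) w = BinaryTree.node c (List.foldr Sylv.insert L w) R
  | [], _ => rfl
  | b :: w, h => by
      have := foldr_le (L := L) (R := R) (w := w) (fun x hx => h x (by simp [hx]))
      simp [this, Sylv.insert, h b (by simp)]

theorem P_postorder {t : BinaryTree α} (ht : IsBST t) : P (postorder t) = t := by
  induction t with
  | nil => rfl
  | node c l r ihl ihr =>
      obtain ⟨h1, h2, h3, h4⟩ := ht
      show List.foldr Sylv.insert BinaryTree.nil (postorder l ++ postorder r ++ [c]) = _
      rw [List.foldr_append, List.foldr_append]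
      have hbase : List.foldr Sylv.insert BinaryTree.nil [c] = BinaryTree.node c BinaryTree.nil BinaryTree.nil := rfl
      rw [hbase]
      rw [foldr_gt (fun b hb => h2 b (mem_postorder_iff.1 hb))]
      rw [foldr_le (fun b hb => h1 b (mem_postorder_iff.1 hb))]
      rw [show List.foldr Sylv.insert BinaryTree.nil (postorder r) = P (postorder r) from rfl,
        show List.foldr Sylv.insert BinaryTree.nil (postorder l) = P (postorder l) from rfl,
        ihl h3, ihr h4]

theorem P_eq_of_cong {u v : List α} (h : SylvCong u v) : P u = P v := by
  induction h with
  | rel p u' q x y z hxy hyz =>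
      have key : P (z :: x :: (u' ++ y :: q)) = P (x :: z :: (u' ++ y :: q)) :=
        insert_comm (isBST_P _) (mem_inorder_P.2 (by simp)) hxy hyz
      simp only [List.cons_append, List.append_assoc]
      unfold P
      rw [List.foldr_append, List.foldr_append]
      exact congrArg (fun t => List.foldr Sylv.insert t p) key
  | refl w => rfl
  | symm _ ih => exact ih.symm
  | trans _ _ ih1 ih2 => exact ih1.trans ih2

end Aux
end Sylv

/-- `P(u) = P(v)` iff `u` and `v` are sylvester-congruent. -/
theorem stmt2 {α : Type*} [LinearOrder α] (u v : List α) :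
    Sylv.P u = Sylv.P v ↔ Sylv.SylvCong u v := by
  constructor
  · intro h
    refine (Sylv.cong_canon u).trans ?_
    rw [h]
    exact (Sylv.cong_canon v).symm
  · exact Sylv.P_eq_of_cong
end

section
/- The sylvester relations preserve the P-symbol: if x ≤ y < z are letters and u is any word, then for any words p, q, P(p · zxuy · q) = P(p · xzuy · q). -/
namespace Sylv

variable {α : Type*}

theorem mem_inorder_insert_iff [LinearOrder α] {y : α} (x : α) (t : BinaryTree α) :
    y ∈ inorder (Sylv.insert x t) ↔ y = x ∨ y ∈ inorder t := by
  induction t with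
  | nil => simp [Sylv.insert, inorder]
  | node a l r ihl ihr =>
      by_cases h : x ≤ a <;>
        simp only [Sylv.insert, h, if_true, if_false, inorder, List.mem_append,
          List.mem_cons, ihl, ihr] <;> tauto

theorem insert_isBST [LinearOrder α] (x : α) {t : BinaryTree α} (h : IsBST t) :
    IsBST (Sylv.insert x t) := by
  induction t with
  | nil => exact ⟨by simp [inorder], by simp [inorder], trivial, trivial⟩
  | node a l r ihl ihr =>
      obtain ⟨hl, hr, bl, br⟩ := h
      by_cases hx : x ≤ a
      · rw [Sylv.insert, if_pos hx]
        refine ⟨?_, hr, ihl bl, br⟩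
        intro b hb
        rcases (mem_inorder_insert_iff x l).1 hb with rfl | hb
        · exact hx
        · exact hl b hb
      · rw [Sylv.insert, if_neg hx]
        refine ⟨hl, ?_, bl, ihr br⟩
        intro b hb
        rcases (mem_inorder_insert_iff x r).1 hb with rfl | hb
        · exact not_le.1 hx
        · exact hr b hb

theorem foldr_isBST [LinearOrder α] (l : List α) {t : BinaryTree α} (h : IsBST t) :
    IsBST (l.foldr Sylv.insert t) := by
  induction l with
  | nil => exact h
  | cons a l ih => exact insert_isBST a ih

theorem mem_inorder_foldr [LinearOrder α] {y : α} (l : List α) {t : BinaryTree α}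
    (h : y ∈ inorder t) : y ∈ inorder (l.foldr Sylv.insert t) := by
  induction l with
  | nil => exact h
  | cons a l ih => exact (mem_inorder_insert_iff a _).2 (Or.inr ih)

theorem insert_comm_of_between [LinearOrder α] {x z : α} {t : BinaryTree α}
    (hb : IsBST t) (h : ∃ a ∈ inorder t, x ≤ a ∧ a < z) :
    Sylv.insert z (Sylv.insert x t) = Sylv.insert x (Sylv.insert z t) := by
  induction t with
  | nil => simp [inorder] at h
  | node b l r ihl ihr =>
      obtain ⟨hl, hr, bl, br⟩ := hb
      obtain ⟨a, ha, hxa, haz⟩ := h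
      simp only [inorder, List.mem_append, List.mem_cons] at ha
      by_cases hxb : x ≤ b <;> by_cases hzb : z ≤ b
      · have hal : a ∈ inorder l := by
          rcases ha with h1 | h2 | h3
          · exact h1
          · exact absurd hzb (not_le.2 (h2 ▸ haz))
          · exact absurd hzb (not_le.2 ((hr a h3).trans haz))
        rw [Sylv.insert, if_pos hxb, Sylv.insert, if_pos hzb,
          Sylv.insert, if_pos hzb, Sylv.insert, if_pos hxb,
          ihl bl ⟨a, hal, hxa, haz⟩]
      · rw [Sylv.insert, if_pos hxb, Sylv.insert, if_neg hzb,
          Sylv.insert, if_neg hzb, Sylv.insert, if_pos hxb]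
      · exact absurd ((le_trans hxa haz.le).trans hzb) hxb
      · have har : a ∈ inorder r := by
          rcases ha with h1 | h2 | h3
          · exact absurd ((hl a h1).trans' hxa) hxb
          · exact absurd (h2 ▸ hxa) hxb
          · exact h3
        rw [Sylv.insert, if_neg hxb, Sylv.insert, if_neg hzb,
          Sylv.insert, if_neg hzb, Sylv.insert, if_neg hxb,
          ihr br ⟨a, har, hxa, haz⟩]

end Sylv

/-- the sylvester relations preserve the `P`-symbol. -/
theorem stmt3 {α : Type*} [LinearOrder α] (p u q : List α) (x y z : α)
    (hxy : x ≤ y) (hyz : y < z) :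
    Sylv.P (p ++ z :: x :: u ++ y :: q) = Sylv.P (p ++ x :: z :: u ++ y :: q) := by
  have hT : Sylv.P (z :: x :: (u ++ y :: q)) = Sylv.P (x :: z :: (u ++ y :: q)) := by
    have hPu : Sylv.P (u ++ y :: q) = u.foldr Sylv.insert (Sylv.P (y :: q)) := by
      simp [Sylv.P, List.foldr_append]
    have hmem : y ∈ Sylv.inorder (Sylv.P (u ++ y :: q)) := by
      rw [hPu]
      exact Sylv.mem_inorder_foldr u
        ((Sylv.mem_inorder_insert_iff y _).2 (Or.inl rfl))
    have hbst : Sylv.IsBST (Sylv.P (u ++ y :: q)) :=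
      Sylv.foldr_isBST _ trivial
    show Sylv.insert z (Sylv.insert x (Sylv.P (u ++ y :: q)))
        = Sylv.insert x (Sylv.insert z (Sylv.P (u ++ y :: q)))
    exact Sylv.insert_comm_of_between hbst ⟨y, hmem, hxy, hyz⟩
  have := congrArg (fun t => p.foldr Sylv.insert t) hT
  simpa [Sylv.P, List.foldr_append] using this
end

section
/- For any labelled binary search tree T, the postfix reading word w_T is the lexicographically smallest word in its sylvester class, i.e., among all words v with P(v) = T, the word w_T is minimal for the lexicographic order. -/
namespace Sylv

variable {α : Type*}

lemma mem_postorder (x : α) : ∀ t : BinaryTree α, x ∈ postorder t ↔ x ∈ inorder t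
  | BinaryTree.nil => Iff.rfl
  | BinaryTree.node a l r => by
      simp [postorder, inorder, mem_postorder x l, mem_postorder x r, or_comm, or_assoc,
        or_left_comm]

lemma numNodes_insert [LinearOrder α] (x : α) :
    ∀ t : BinaryTree α, (Sylv.insert x t).numNodes = t.numNodes + 1
  | BinaryTree.nil => rfl
  | BinaryTree.node a l r => by
      by_cases h : x ≤ a <;>
        simp [Sylv.insert, h, BinaryTree.numNodes, numNodes_insert x l, numNodes_insert x r] <;> omega

lemma numNodes_P [LinearOrder α] (w : List α) : (P w).numNodes = w.length := by
  induction w with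
  | nil => rfl
  | cons a w ih => simp [P, List.foldr] at ih ⊢; rw [numNodes_insert]; omega

lemma length_postorder : ∀ t : BinaryTree α, (postorder t).length = t.numNodes
  | BinaryTree.nil => rfl
  | BinaryTree.node a l r => by
      simp [postorder, BinaryTree.numNodes, length_postorder l, length_postorder r]; omega

lemma foldr_insert_node [LinearOrder α] (a : α) :
    ∀ (u : List α) (l r : BinaryTree α),
      u.foldr Sylv.insert (BinaryTree.node a l r) =
        BinaryTree.node a ((u.filter (fun x => x ≤ a)).foldr Sylv.insert l)
          ((u.filter (fun x => ¬ x ≤ a)).foldr Sylv.insert r)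
  | [], l, r => rfl
  | c :: u, l, r => by
      by_cases h : c ≤ a <;>
        simp [List.foldr, foldr_insert_node a u l r, List.filter, h, Sylv.insert]

lemma lex_append_of_lex {r : α → α → Prop} :
    ∀ {u s : List α}, u.length = s.length → List.Lex r u s →
      ∀ (x y : List α), List.Lex r (u ++ x) (s ++ y) := by
  intro u s hlen hlex
  induction hlex with
  | nil => simp at hlen
  | rel h => intro x y; exact List.Lex.rel h
  | cons h ih =>
      intro x y
      exact List.Lex.cons (ih (by simpa using hlen) x y)

lemma filter_not_eq_self_of_filter_nil [LinearOrder α] (a : α) :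
    ∀ s : List α, s.filter (fun x => x ≤ a) = [] →
      s.filter (fun x => ¬ x ≤ a) = s := by
  intro s hs
  rw [List.filter_eq_self]
  intro x hx
  simp only [List.filter_eq_nil_iff] at hs
  simpa using hs x hx

lemma lexmin [LinearOrder α] (a : α) :
    ∀ (s A B A' B' : List α),
      s.filter (fun x => x ≤ a) = A' →
      s.filter (fun x => ¬ x ≤ a) = B' →
      A.length = A'.length →
      (∀ x ∈ A, x ≤ a) →
      (A = A' ∨ List.Lex (· < ·) A A') →
      (B = B' ∨ List.Lex (· < ·) B B') →
      (A ++ B = s ∨ List.Lex (· < ·) (A ++ B) s) := by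
  intro s
  induction s with
  | nil =>
      intro A B A' B' hA' hB' hlen _ hArel hBrel
      subst hA'; subst hB'
      simp only [List.filter_nil] at *
      have hA : A = [] := List.length_eq_zero_iff.mp hlen
      subst hA
      rcases hBrel with h | h
      · subst h; left; rfl
      · cases h
  | cons c s ih =>
      intro A B A' B' hA' hB' hlen hAle hArel hBrel
      by_cases hc : c ≤ a
      · -- A' = c :: filter s
        rw [List.filter_cons_of_pos (by simpa using hc)] at hA'
        rw [List.filter_cons_of_neg (by simpa using hc)] at hB'
        subst hA'
        -- A nonempty
        cases A with
        | nil => simp at hlen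
        | cons d A2 =>
            rcases hArel with h | h
            · -- A = c :: filter s
              have hd : d = c := by injection h
              have hA2 : A2 = s.filter (fun x => x ≤ a) := by injection h
              subst hd
              have hrec := ih A2 B (s.filter (fun x => x ≤ a)) B' rfl hB'
                (by simp [hA2]) (fun x hx => hAle x (List.mem_cons_of_mem _ hx))
                (Or.inl hA2) hBrel
              rcases hrec with h2 | h2
              · left; simp [h2]
              · right; exact List.Lex.cons h2
            · cases h with
              | rel hr => right; exact List.Lex.rel hr
              | cons hlex =>
                  have hrec := ih A2 B (s.filter (fun x => x ≤ a)) B' rfl hB'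
                    (by simpa using hlen) (fun x hx => hAle x (List.mem_cons_of_mem _ hx))
                    (Or.inr hlex) hBrel
                  rcases hrec with h2 | h2
                  · left; simp [h2]
                  · right; exact List.Lex.cons h2
      · -- c > a
        rw [List.filter_cons_of_neg (by simpa using hc)] at hA'
        rw [List.filter_cons_of_pos (by simpa using hc)] at hB'
        cases A with
        | nil =>
            -- A' = [], so s = filter ¬ s, s = tail of B'
            have hAnil : A' = [] := (List.length_eq_zero_iff.mp hlen.symm)
            rw [hAnil] at hA'
            have hs : s.filter (fun x => ¬ x ≤ a) = s :=
              filter_not_eq_self_of_filter_nil a s hA'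
            rw [hs] at hB'
            rw [hB']
            simpa using hBrel
        | cons d A2 =>
            right
            have hd : d ≤ a := hAle d (List.mem_cons_self)
            exact List.Lex.rel (lt_of_le_of_lt hd (lt_of_not_ge hc))

lemma length_filter_partition [LinearOrder α] (a : α) :
    ∀ l : List α,
      (l.filter (fun x => x ≤ a)).length + (l.filter (fun x => ¬ x ≤ a)).length = l.length := by
  intro l
  induction l with
  | nil => rfl
  | cons c l ih =>
      simp only [List.filter_cons, List.length_cons]
      by_cases h : c ≤ a
      · rw [if_pos (by simpa using h), if_neg (by simpa using h)]
        simp only [List.length_cons]; omega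
      · rw [if_neg (by simpa using h), if_pos (by simpa using h)]
        simp only [List.length_cons]; omega

lemma stmt5_aux [LinearOrder α] :
    ∀ (n : ℕ) (v : List α), v.length ≤ n → ∀ t : BinaryTree α, IsBST t → P v = t →
      postorder t = v ∨ List.Lex (· < ·) (postorder t) v := by
  intro n
  induction n with
  | zero =>
      intro v hv t _ hP
      have : v = [] := List.length_eq_zero_iff.mp (Nat.le_zero.mp hv)
      subst this; subst hP; left; rfl
  | succ n ih =>
      intro v hv t ht hP
      rcases List.eq_nil_or_concat v with rfl | ⟨v', a, rfl⟩
      · subst hP; left; rfl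
      · simp only [List.concat_eq_append] at hv hP ⊢
        set A' := v'.filter (fun x => x ≤ a) with hA'
        set B' := v'.filter (fun x => ¬ x ≤ a) with hB'
        have hPv : P (v' ++ [a]) = BinaryTree.node a (P A') (P B') := by
          show (v' ++ [a]).foldr Sylv.insert BinaryTree.nil = _
          rw [List.foldr_append]
          show v'.foldr Sylv.insert (BinaryTree.node a BinaryTree.nil BinaryTree.nil) = _
          rw [foldr_insert_node]
          rfl
        rw [hPv] at hP
        subst hP
        obtain ⟨h1, h2, h3, h4⟩ := ht
        have hlenv : v'.length ≤ n := by
          have := hv; simp at this; omega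
        have hIHl := ih A' (le_trans (List.length_filter_le _ _) hlenv) (P A') h3 rfl
        have hIHr := ih B' (le_trans (List.length_filter_le _ _) hlenv) (P B') h4 rfl
        have hlenA : (postorder (P A')).length = A'.length := by
          rw [length_postorder, numNodes_P]
        have hlenB : (postorder (P B')).length = B'.length := by
          rw [length_postorder, numNodes_P]
        have hAle : ∀ x ∈ postorder (P A'), x ≤ a := by
          intro x hx
          exact h1 x ((mem_postorder x _).mp hx)
        have hmain := lexmin a v' (postorder (P A')) (postorder (P B')) A' B'
          rfl rfl hlenA hAle hIHl hIHr
        have hlen2 : (postorder (P A') ++ postorder (P B')).length = v'.length := by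
          rw [List.length_append, hlenA, hlenB, hA', hB', length_filter_partition]
        show postorder (P A') ++ postorder (P B') ++ [a] = v' ++ [a] ∨ _
        rcases hmain with h | h
        · left; rw [h]
        · right
          exact lex_append_of_lex hlen2 h [a] [a]

end Sylv

/-- the postfix reading word is lexicographically minimal in its sylvester class. -/
theorem stmt5 {α : Type*} [LinearOrder α] (t : BinaryTree α) (ht : Sylv.IsBST t)
    (v : List α) (hv : Sylv.P v = t) :
    Sylv.postorder t = v ∨ List.Lex (· < ·) (Sylv.postorder t) v :=
  Sylv.stmt5_aux v.length v le_rfl t ht hv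
end

section
/- The sylvester congruence is compatible with restriction to intervals of the alphabet: if u ≡ v are sylvester-congruent words over A and I is an interval of A, then the restrictions u|_I and v|_I (the subwords of letters belonging to I) are sylvester-congruent. -/
/-- the sylvester congruence is compatible with restriction to
intervals of the alphabet. -/
theorem stmt7 {α : Type*} [LinearOrder α] (I : Set α) [DecidablePred (· ∈ I)]
    (hI : ∀ a b c : α, a ∈ I → c ∈ I → a ≤ b → b ≤ c → b ∈ I)
    (u v : List α) (h : Sylv.SylvCong u v) :
    Sylv.SylvCong (u.filter (fun a => decide (a ∈ I))) (v.filter (fun a => decide (a ∈ I))) := by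
  induction h with
  | refl w => exact Sylv.SylvCong.refl _
  | symm _ ih => exact ih.symm
  | trans _ _ ih1 ih2 => exact ih1.trans ih2
  | rel p u q x y z hxy hyz =>
    by_cases hx : x ∈ I <;> by_cases hz : z ∈ I
    · have hy : y ∈ I := hI x y z hx hz hxy hyz.le
      have h1 : (p ++ z :: x :: u ++ y :: q).filter (fun a => decide (a ∈ I))
          = p.filter (fun a => decide (a ∈ I)) ++ z :: x :: u.filter (fun a => decide (a ∈ I))
              ++ y :: q.filter (fun a => decide (a ∈ I)) := by
        simp [List.filter_append, List.filter_cons, hx, hy, hz]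
      have h2 : (p ++ x :: z :: u ++ y :: q).filter (fun a => decide (a ∈ I))
          = p.filter (fun a => decide (a ∈ I)) ++ x :: z :: u.filter (fun a => decide (a ∈ I))
              ++ y :: q.filter (fun a => decide (a ∈ I)) := by
        simp [List.filter_append, List.filter_cons, hx, hy, hz]
      rw [h1, h2]
      exact Sylv.SylvCong.rel _ _ _ x y z hxy hyz
    all_goals {
      have heq : (p ++ z :: x :: u ++ y :: q).filter (fun a => decide (a ∈ I))
          = (p ++ x :: z :: u ++ y :: q).filter (fun a => decide (a ∈ I)) := by
        simp [List.filter_append, List.filter_cons, hx, hz]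
      rw [heq]
      exact Sylv.SylvCong.refl _ }
end

section
/- A word is sylvester-congruent to its standardization pattern in the following sense: for words u and v of the same length, if std(u) = std(v) then P(u) and P(v) have the same underlying unlabelled tree shape; in fact the shape of P(w) equals the shape of the decreasing tree T(std(w)^{-1}). -/
namespace SylvAux
open List

variable {α : Type*} [LinearOrder α]

lemma inorder_eq_nil {β : Type*} {t : BinaryTree β} (h : Sylv.inorder t = []) : t = BinaryTree.nil := by
  cases t with
  | nil => rfl
  | node a l r => simp [Sylv.inorder] at h

lemma length_lt_of_sublist_of_not_mem {β : Type*} {l₁ l₂ : List β} (h : l₁ <+ l₂) (x : β)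
    (hx2 : x ∈ l₂) (hx1 : x ∉ l₁) : l₁.length < l₂.length := by
  rcases lt_or_eq_of_le h.length_le with h' | h'
  · exact h'
  · exact absurd (h.eq_of_length h' ▸ hx2) hx1

lemma foldr_insert_node (v : List α) (c : α) (l r : BinaryTree α) :
    v.foldr Sylv.insert (BinaryTree.node c l r) =
      BinaryTree.node c ((v.filter (fun x => decide (x ≤ c))).foldr Sylv.insert l)
        ((v.filter (fun x => !decide (x ≤ c))).foldr Sylv.insert r) := by
  induction v with
  | nil => simp
  | cons x v ih =>
    simp only [foldr_cons, ih, filter_cons]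
    by_cases h : x ≤ c
    · simp [h, Sylv.insert]
    · simp [h, Sylv.insert]

lemma P_concat (v : List α) (a : α) :
    Sylv.P (v ++ [a]) = BinaryTree.node a (Sylv.P (v.filter (fun x => decide (x ≤ a))))
      (Sylv.P (v.filter (fun x => !decide (x ≤ a)))) := by
  show (v ++ [a]).foldr Sylv.insert BinaryTree.nil = _
  rw [List.foldr_append]
  exact foldr_insert_node v a BinaryTree.nil BinaryTree.nil

def ordk (f : ℕ → α) (p q : ℕ) : Prop := f p < f q ∨ (f p = f q ∧ p < q)

instance (f : ℕ → α) (p q : ℕ) : Decidable (ordk f p q) := by unfold ordk; infer_instance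

lemma ordk_irrefl (f : ℕ → α) (p : ℕ) : ¬ ordk f p p := by simp [ordk]

lemma ordk_asymm {f : ℕ → α} {p q : ℕ} (h : ordk f p q) : ¬ ordk f q p := by
  rcases h with h | ⟨h1, h2⟩
  · rintro (h' | ⟨h1', h2'⟩)
    · exact absurd h' (lt_asymm h)
    · exact absurd h (h1' ▸ lt_irrefl _)
  · rintro (h' | ⟨h1', h2'⟩)
    · exact absurd h' (h1 ▸ lt_irrefl _)
    · omega

lemma ML : ∀ (n : ℕ) (z : List (α × ℕ)), z.length ≤ n → ∀ (f : ℕ → α),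
    (z.map Prod.snd).Pairwise (· < ·) → (∀ e ∈ z, e.1 = f e.2) →
    ∀ t : BinaryTree ℕ, Sylv.IsDecreasing t → (Sylv.inorder t).Pairwise (ordk f) →
    (Sylv.inorder t).Perm (z.map Prod.snd) →
    Sylv.shape (Sylv.P (z.map Prod.fst)) = Sylv.shape t := by
  intro n
  induction n with
  | zero =>
    intro z hz f _ _ t _ _ hperm
    have hznil : z = [] := List.eq_nil_of_length_eq_zero (Nat.le_zero.mp hz)
    subst hznil
    have : Sylv.inorder t = [] := hperm.eq_nil
    rw [inorder_eq_nil this]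
    rfl
  | succ n ih =>
    intro z hz f hpos hf t hdec hpw hperm
    rcases List.eq_nil_or_concat z with hznil | ⟨u, e, hze⟩
    · subst hznil
      have : Sylv.inorder t = [] := hperm.eq_nil
      rw [inorder_eq_nil this]
      rfl
    rw [List.concat_eq_append] at hze
    obtain ⟨a, p⟩ := e
    subst hze
    have hlenu : u.length ≤ n := by
      have := hz; simp at this; omega
    rw [List.map_append] at hpos hperm
    simp only [List.map_cons, List.map_nil] at hpos hperm
    have hple : ∀ q ∈ u.map Prod.snd, q < p := by
      intro q hq
      exact (List.pairwise_append.mp hpos).2.2 q hq p (by simp)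
    cases t with
    | nil =>
      exfalso
      have := hperm.length_eq
      simp [Sylv.inorder] at this
    | node m l r =>
      have hinor : Sylv.inorder (BinaryTree.node m l r)
          = Sylv.inorder l ++ m :: Sylv.inorder r := rfl
      rw [hinor] at hpw hperm
      obtain ⟨hdl, hdr, hdecl, hdecr⟩ :
          (∀ x ∈ Sylv.inorder l, x < m) ∧ (∀ x ∈ Sylv.inorder r, x < m) ∧
            Sylv.IsDecreasing l ∧ Sylv.IsDecreasing r := hdec
      have hmem_p : p ∈ Sylv.inorder l ++ m :: Sylv.inorder r := by
        rw [hperm.mem_iff]; simp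
      have hm_le : m ≤ p := by
        have hmmem : m ∈ u.map Prod.snd ++ [p] := by
          rw [← hperm.mem_iff]; simp
        rcases List.mem_append.mp hmmem with h | h
        · exact le_of_lt (hple m h)
        · simp at h; omega
      have hmp : m = p := by
        rcases List.mem_append.mp hmem_p with h | h
        · exact absurd (lt_of_lt_of_le (hdl p h) hm_le) (lt_irrefl p)
        · rcases List.mem_cons.mp h with h | h
          · omega
          · exact absurd (lt_of_lt_of_le (hdr p h) hm_le) (lt_irrefl p)
      subst hmp
      rw [List.pairwise_append] at hpw
      obtain ⟨hpwl, hpwr', hcross⟩ := hpw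
      rw [List.pairwise_cons] at hpwr'
      obtain ⟨hmr, hpwr⟩ := hpwr'
      have hil : ∀ q ∈ Sylv.inorder l, ordk f q m := fun q hq => hcross q hq m (by simp)
      have hir : ∀ q ∈ Sylv.inorder r, ordk f m q := hmr
      have hfa : a = f m := hf (a, m) (by simp)
      set gl : ℕ → Bool := fun q => decide (ordk f q m) with hgl
      set gr : ℕ → Bool := fun q => decide (ordk f m q) with hgr
      have hglm : gl m = false := by simp [hgl, ordk_irrefl]
      have hgrm : gr m = false := by simp [hgr, ordk_irrefl]
      have hLHSl : (Sylv.inorder l ++ m :: Sylv.inorder r).filter gl = Sylv.inorder l := by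
        rw [List.filter_append, List.filter_cons, hglm]
        simp only [Bool.false_eq_true, if_false]
        rw [List.filter_eq_self.mpr (fun q hq => by simpa [hgl] using hil q hq),
          List.filter_eq_nil_iff.mpr (fun q hq => by
            simp only [hgl, decide_eq_true_eq]; exact ordk_asymm (hir q hq))]
        simp
      have hLHSr : (Sylv.inorder l ++ m :: Sylv.inorder r).filter gr = Sylv.inorder r := by
        rw [List.filter_append, List.filter_cons, hgrm]
        simp only [Bool.false_eq_true, if_false]
        rw [List.filter_eq_nil_iff.mpr (fun q hq => by
            simp only [hgr, decide_eq_true_eq]; exact ordk_asymm (hil q hq)),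
          List.filter_eq_self.mpr (fun q hq => by simpa [hgr] using hir q hq)]
        simp
      have hpl : (Sylv.inorder l).Perm ((u.map Prod.snd).filter gl) := by
        have h0 := hperm.filter gl
        rw [hLHSl] at h0
        have hRHS : (u.map Prod.snd ++ [m]).filter gl = (u.map Prod.snd).filter gl := by
          rw [List.filter_append, List.filter_cons, hglm]
          simp
        rwa [hRHS] at h0
      have hpr : (Sylv.inorder r).Perm ((u.map Prod.snd).filter gr) := by
        have h0 := hperm.filter gr
        rw [hLHSr] at h0
        have hRHS : (u.map Prod.snd ++ [m]).filter gr = (u.map Prod.snd).filter gr := by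
          rw [List.filter_append, List.filter_cons, hgrm]
          simp
        rwa [hRHS] at h0
      set ul := u.filter (gl ∘ Prod.snd) with hul
      set ur := u.filter (gr ∘ Prod.snd) with hur
      have hmfl : (u.map Prod.snd).filter gl = ul.map Prod.snd := List.filter_map (f := Prod.snd) (l := u)
      have hmfr : (u.map Prod.snd).filter gr = ur.map Prod.snd := List.filter_map (f := Prod.snd) (l := u)
      have hpos_u : (u.map Prod.snd).Pairwise (· < ·) := (List.pairwise_append.mp hpos).1
      have hL : Sylv.shape (Sylv.P (ul.map Prod.fst)) = Sylv.shape l := by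
        apply ih ul (le_trans (List.length_filter_le _ _) hlenu) f
        · exact List.Pairwise.sublist (hmfl ▸ List.filter_sublist (l := u.map Prod.snd)) hpos_u
        · intro e he
          rw [hul] at he
          exact hf e (List.mem_append_left _ (List.mem_of_mem_filter he))
        · exact hdecl
        · exact hpwl
        · rw [← hmfl]; exact hpl
      have hR : Sylv.shape (Sylv.P (ur.map Prod.fst)) = Sylv.shape r := by
        apply ih ur (le_trans (List.length_filter_le _ _) hlenu) f
        · exact List.Pairwise.sublist (hmfr ▸ List.filter_sublist (l := u.map Prod.snd)) hpos_u
        · intro e he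
          rw [hur] at he
          exact hf e (List.mem_append_left _ (List.mem_of_mem_filter he))
        · exact hdecr
        · exact hpwr
        · rw [← hmfr]; exact hpr
      have hflt : (u.map Prod.fst).filter (fun x => decide (x ≤ a)) = ul.map Prod.fst := by
        rw [List.filter_map (f := Prod.fst) (l := u), hul]
        congr 1
        apply List.filter_congr
        intro e he
        have h2 : e.2 < m := hple e.2 (List.mem_map_of_mem (f := Prod.snd) he)
        have h1 : e.1 = f e.2 := hf e (List.mem_append_left _ he)
        show decide (e.1 ≤ a) = gl e.2
        simp only [hgl, decide_eq_decide]
        unfold ordk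
        rw [← h1, ← hfa]
        constructor
        · intro h
          rcases lt_or_eq_of_le h with h' | h'
          · exact Or.inl h'
          · exact Or.inr ⟨h', h2⟩
        · rintro (h | ⟨h, _⟩)
          · exact le_of_lt h
          · exact le_of_eq h
      have hfrt : (u.map Prod.fst).filter (fun x => !decide (x ≤ a)) = ur.map Prod.fst := by
        rw [List.filter_map (f := Prod.fst) (l := u), hur]
        congr 1
        apply List.filter_congr
        intro e he
        have h2 : e.2 < m := hple e.2 (List.mem_map_of_mem (f := Prod.snd) he)
        have h1 : e.1 = f e.2 := hf e (List.mem_append_left _ he)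
        show (!decide (e.1 ≤ a)) = gr e.2
        simp only [hgr, ← decide_not, decide_eq_decide]
        unfold ordk
        rw [← h1, ← hfa, not_le]
        constructor
        · intro h; exact Or.inl h
        · rintro (h | ⟨h, h'⟩)
          · exact h
          · omega
      rw [List.map_append]
      simp only [List.map_cons, List.map_nil]
      rw [P_concat, hflt, hfrt]
      show BinaryTree.node () _ _ = BinaryTree.node () _ _
      rw [hL, hR]

section Std
variable [Inhabited α]

/-- The comparison underlying standardization. -/
def cnd (w : List α) (j i : ℕ) : Prop :=
  w.getD j default < w.getD i default ∨ (w.getD j default = w.getD i default ∧ j < i)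

instance (w : List α) (j i : ℕ) : Decidable (cnd w j i) := by unfold cnd; infer_instance

/-- The rank function of standardization. -/
def R (w : List α) (i : ℕ) : ℕ :=
  ((List.range w.length).filter (fun j =>
    w.getD j default < w.getD i default ∨
      (w.getD j default = w.getD i default ∧ j < i))).length

lemma std_eq (w : List α) :
    Sylv.std w = (List.range w.length).map (fun i => R w i + 1) := rfl

lemma mem_R_filter (w : List α) (i j : ℕ) :
    j ∈ (List.range w.length).filter (fun j =>
      decide (w.getD j default < w.getD i default ∨
        (w.getD j default = w.getD i default ∧ j < i))) ↔ j < w.length ∧ cnd w j i := by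
  simp [cnd, List.mem_filter]

lemma cnd_irrefl (w : List α) (i : ℕ) : ¬ cnd w i i := by simp [cnd]

lemma cnd_trans {w : List α} {i j k : ℕ} (h1 : cnd w i j) (h2 : cnd w j k) : cnd w i k := by
  unfold cnd at *
  rcases h1 with h1 | ⟨h1, h1'⟩ <;> rcases h2 with h2 | ⟨h2, h2'⟩
  · exact Or.inl (lt_trans h1 h2)
  · exact Or.inl (h2 ▸ h1)
  · exact Or.inl (h1 ▸ h2)
  · exact Or.inr ⟨h1.trans h2, Nat.lt_trans h1' h2'⟩

lemma cnd_total {w : List α} {i j : ℕ} (h : i ≠ j) : cnd w i j ∨ cnd w j i := by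
  unfold cnd
  rcases lt_trichotomy (w.getD i default) (w.getD j default) with h' | h' | h'
  · exact Or.inl (Or.inl h')
  · rcases Nat.lt_or_ge i j with h'' | h''
    · exact Or.inl (Or.inr ⟨h', h''⟩)
    · exact Or.inr (Or.inr ⟨h'.symm, by omega⟩)
  · exact Or.inr (Or.inl h')

lemma R_lt (w : List α) {i : ℕ} (hi : i < w.length) : R w i < w.length := by
  have h := length_lt_of_sublist_of_not_mem
    (List.filter_sublist (p := fun j =>
      decide (w.getD j default < w.getD i default ∨
        (w.getD j default = w.getD i default ∧ j < i))) (l := List.range w.length)) i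
    (List.mem_range.mpr hi)
    (by rw [mem_R_filter]; exact fun h => cnd_irrefl w i h.2)
  rw [List.length_range] at h
  exact h

lemma R_mono (w : List α) {i i' : ℕ} (hi : i < w.length) (hc : cnd w i i') :
    R w i < R w i' := by
  apply length_lt_of_sublist_of_not_mem
    (List.monotone_filter_right _ ?_) i
    (by rw [mem_R_filter]; exact ⟨hi, hc⟩)
    (by rw [mem_R_filter]; exact fun h => cnd_irrefl w i h.2)
  intro j hj
  simp only [decide_eq_true_eq] at hj ⊢
  exact cnd_trans (w := w) hj hc

lemma R_inj (w : List α) {i i' : ℕ} (hi : i < w.length) (hi' : i' < w.length)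
    (h : R w i = R w i') : i = i' := by
  by_contra hne
  rcases cnd_total (w := w) hne with hc | hc
  · exact absurd h (Nat.ne_of_lt (R_mono w hi hc))
  · exact absurd h.symm (Nat.ne_of_lt (R_mono w hi' hc))

lemma R_surj (w : List α) {j : ℕ} (hj : j < w.length) : ∃ i < w.length, R w i = j := by
  have := Finset.surj_on_of_inj_on_of_card_le (s := Finset.range w.length)
    (t := Finset.range w.length) (fun i _ => R w i)
    (fun i hi => Finset.mem_range.mpr (R_lt w (Finset.mem_range.mp hi)))
    (fun i i' hi hi' h => R_inj w (Finset.mem_range.mp hi) (Finset.mem_range.mp hi') h)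
    le_rfl j (Finset.mem_range.mpr hj)
  obtain ⟨i, hi, hij⟩ := this
  exact ⟨i, Finset.mem_range.mp hi, hij.symm⟩

lemma length_std (w : List α) : (Sylv.std w).length = w.length := by
  rw [std_eq]; simp

lemma std_getElem (w : List α) {i : ℕ} (hi : i < w.length) :
    (Sylv.std w)[i]'(by rw [length_std]; exact hi) = R w i + 1 := by
  simp only [std_eq, List.getElem_map, List.getElem_range]

lemma std_nodup (w : List α) : (Sylv.std w).Nodup := by
  rw [std_eq]
  apply List.Nodup.map_on _ List.nodup_range
  intro i hi i' hi' h
  exact R_inj w (List.mem_range.mp hi) (List.mem_range.mp hi') (by omega)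

lemma mem_std (w : List α) {j : ℕ} (hj : j < w.length) : j + 1 ∈ Sylv.std w := by
  obtain ⟨i, hi, hR⟩ := R_surj w hj
  rw [std_eq]
  exact List.mem_map.mpr ⟨i, List.mem_range.mpr hi, by rw [hR]⟩

lemma R_indexOf (w : List α) {j : ℕ} (hj : j < w.length) :
    (Sylv.std w).idxOf (j + 1) < w.length ∧
      R w ((Sylv.std w).idxOf (j + 1)) = j := by
  have hmem : j + 1 ∈ Sylv.std w := mem_std w hj
  have hlt : (Sylv.std w).idxOf (j + 1) < (Sylv.std w).length :=
    List.idxOf_lt_length_iff.mpr hmem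
  have hlt' : (Sylv.std w).idxOf (j + 1) < w.length := by rwa [length_std] at hlt
  refine ⟨hlt', ?_⟩
  have := List.idxOf_get (a := j + 1) (l := Sylv.std w) hlt
  rw [List.get_eq_getElem] at this
  rw [std_getElem w hlt'] at this
  omega

lemma invPerm_std_eq (w : List α) :
    Sylv.invPerm (Sylv.std w) =
      (List.range w.length).map (fun j => (Sylv.std w).idxOf (j + 1) + 1) := by
  unfold Sylv.invPerm
  rw [length_std]

lemma invPerm_std_nodup (w : List α) : (Sylv.invPerm (Sylv.std w)).Nodup := by
  rw [invPerm_std_eq]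
  apply List.Nodup.map_on _ List.nodup_range
  intro j hj j' hj' h
  have h1 := (R_indexOf w (List.mem_range.mp hj)).2
  have h2 := (R_indexOf w (List.mem_range.mp hj')).2
  rw [show (Sylv.std w).idxOf (j + 1) = (Sylv.std w).idxOf (j' + 1) by omega] at h1
  omega

lemma invPerm_std_perm (w : List α) :
    (Sylv.invPerm (Sylv.std w)).Perm (List.range' 1 w.length) := by
  apply List.Subperm.perm_of_length_le
  · apply List.subperm_of_subset (invPerm_std_nodup w)
    intro p hp
    rw [invPerm_std_eq] at hp
    obtain ⟨j, hj, hpj⟩ := List.mem_map.mp hp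
    have := (R_indexOf w (List.mem_range.mp hj)).1
    rw [List.mem_range'_1]
    omega
  · rw [invPerm_std_eq]
    simp

lemma invPerm_std_pairwise (w : List α) :
    (Sylv.invPerm (Sylv.std w)).Pairwise (ordk (fun p => w.getD (p - 1) default)) := by
  rw [invPerm_std_eq, List.pairwise_map]
  rw [List.pairwise_iff_getElem]
  intro j j' hj hj' hjj'
  simp only [List.getElem_range] at *
  rw [List.length_range] at hj hj'
  obtain ⟨hi, hRi⟩ := R_indexOf w hj
  obtain ⟨hi', hRi'⟩ := R_indexOf w hj'
  set i := (Sylv.std w).idxOf (j + 1)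
  set i' := (Sylv.std w).idxOf (j' + 1)
  have hne : i ≠ i' := by intro h; rw [h] at hRi; omega
  have hc : cnd w i i' := by
    rcases cnd_total (w := w) hne with hc | hc
    · exact hc
    · exact absurd (R_mono w hi' hc) (by omega)
  unfold ordk
  simp only [Nat.add_sub_cancel]
  unfold cnd at hc
  rcases hc with hc | ⟨hc, hc'⟩
  · exact Or.inl hc
  · exact Or.inr ⟨hc, by omega⟩

lemma zip_range' (w : List α) : ∀ (s : ℕ) (e : α × ℕ),
    e ∈ w.zip (List.range' s w.length) → e.1 = w.getD (e.2 - s) default := by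
  induction w with
  | nil => intro s e he; simp at he
  | cons a w ih =>
    intro s e he
    rw [List.length_cons, List.range'_succ, List.zip_cons_cons] at he
    rcases List.mem_cons.mp he with h | h
    · subst h; simp
    · have h1 := ih (s + 1) e h
      have h2 : e.2 ∈ List.range' (s + 1) w.length := (List.of_mem_zip h).2
      rw [List.mem_range'_1] at h2
      have : e.2 - s = (e.2 - (s + 1)) + 1 := by omega
      rw [this, List.getD_cons_succ]
      exact h1

lemma shape_P_eq (w : List α) (t : BinaryTree ℕ)
    (ht : Sylv.IsDecrTreeOf (Sylv.invPerm (Sylv.std w)) t) :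
    Sylv.shape (Sylv.P w) = Sylv.shape t := by
  obtain ⟨hdec, hin⟩ := ht
  set z := w.zip (List.range' 1 w.length) with hz
  have hlen : (List.range' 1 w.length).length = w.length := by simp
  have hmf : z.map Prod.fst = w := List.map_fst_zip (by rw [hlen])
  have hms : z.map Prod.snd = List.range' 1 w.length := List.map_snd_zip (by rw [hlen])
  have := ML z.length z le_rfl (fun p => w.getD (p - 1) default)
    (by rw [hms]; exact List.pairwise_lt_range')
    (fun e he => zip_range' w 1 e he)
    t hdec (by rw [hin]; exact invPerm_std_pairwise w)
    (by rw [hin, hms]; exact invPerm_std_perm w)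
  rwa [hmf] at this

end Std

/-! ### Construction of decreasing trees -/

def mkDT : ℕ → List ℕ → BinaryTree ℕ
  | 0, _ => BinaryTree.nil
  | (fuel+1), l =>
    match l.max? with
    | none => BinaryTree.nil
    | some m => BinaryTree.node m (mkDT fuel (l.take (l.idxOf m)))
        (mkDT fuel (l.drop (l.idxOf m + 1)))

lemma mkDT_spec : ∀ (fuel : ℕ) (l : List ℕ), l.length ≤ fuel → l.Nodup →
    Sylv.IsDecrTreeOf l (mkDT fuel l) := by
  intro fuel
  induction fuel with
  | zero =>
    intro l hl _
    have : l = [] := List.eq_nil_of_length_eq_zero (Nat.le_zero.mp hl)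
    subst this
    exact ⟨trivial, rfl⟩
  | succ fuel ih =>
    intro l hl hnd
    rcases hm : l.max? with _ | m
    · rw [List.max?_eq_none_iff] at hm
      subst hm
      show Sylv.IsDecrTreeOf [] (mkDT (fuel+1) [])
      exact ⟨trivial, rfl⟩
    · have hmax : m ∈ l ∧ ∀ x ∈ l, x ≤ m := by
        rw [List.max?_eq_some_iff] at hm
        exact hm
      set i := l.idxOf m with hi
      have hilt : i < l.length := List.idxOf_lt_length_iff.mpr hmax.1
      have hdrop : l.drop i = l[i] :: l.drop (i + 1) := List.drop_eq_getElem_cons hilt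
      have hgi : l[i] = m := by
        have := List.idxOf_get (a := m) (l := l) hilt
        rwa [List.get_eq_getElem] at this
      have hsplit : l.take i ++ m :: l.drop (i + 1) = l := by
        rw [← hgi, ← hdrop, List.take_append_drop]
      have htlen : (l.take i).length ≤ fuel := by
        rw [List.length_take]; omega
      have hdlen : (l.drop (i + 1)).length ≤ fuel := by
        rw [List.length_drop]; omega
      have htsub : l.take i <+ l := List.take_sublist _ _
      have hdsub : l.drop (i + 1) <+ l := List.drop_sublist _ _
      obtain ⟨hdect, hint⟩ := ih (l.take i) htlen (hnd.sublist htsub)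
      obtain ⟨hdecd, hind⟩ := ih (l.drop (i + 1)) hdlen (hnd.sublist hdsub)
      have hnd' : (l.take i ++ m :: l.drop (i + 1)).Nodup := by rw [hsplit]; exact hnd
      rw [List.nodup_append] at hnd'
      have hmnt : m ∉ l.take i := fun hmem => hnd'.2.2 m hmem m (by simp) rfl
      have hmnd : m ∉ l.drop (i + 1) := (List.nodup_cons.mp hnd'.2.1).1
      have hmk : mkDT (fuel + 1) l
          = BinaryTree.node m (mkDT fuel (l.take i)) (mkDT fuel (l.drop (i + 1))) := by
        simp only [mkDT, hm, ← hi]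
      rw [hmk]
      constructor
      · refine ⟨?_, ?_, hdect, hdecd⟩
        · intro x hx
          rw [hint] at hx
          refine lt_of_le_of_ne (hmax.2 x (htsub.subset hx)) ?_
          intro hxe; exact hmnt (hxe ▸ hx)
        · intro x hx
          rw [hind] at hx
          refine lt_of_le_of_ne (hmax.2 x (hdsub.subset hx)) ?_
          intro hxe; exact hmnd (hxe ▸ hx)
      · show Sylv.inorder _ ++ m :: Sylv.inorder _ = l
        rw [hint, hind, hsplit]

end SylvAux

/-- words with the same standardization give `P`-symbols of the same shape;
indeed the shape of `P(w)` is that of the decreasing tree of `std(w)⁻¹`. -/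
theorem stmt8 {α : Type*} [LinearOrder α] [Inhabited α] :
    (∀ u v : List α, Sylv.std u = Sylv.std v →
      Sylv.shape (Sylv.P u) = Sylv.shape (Sylv.P v)) ∧
    (∀ (w : List α) (t : BinaryTree ℕ), Sylv.IsDecrTreeOf (Sylv.invPerm (Sylv.std w)) t →
      Sylv.shape (Sylv.P w) = Sylv.shape t) := by
  constructor
  · intro u v h
    have hnd : (Sylv.invPerm (Sylv.std u)).Nodup := SylvAux.invPerm_std_nodup u
    have hspec := SylvAux.mkDT_spec (Sylv.invPerm (Sylv.std u)).length
      (Sylv.invPerm (Sylv.std u)) le_rfl hnd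
    have h1 := SylvAux.shape_P_eq u _ hspec
    have h2 := SylvAux.shape_P_eq v _ (by rw [← h]; exact hspec)
    exact h1.trans h2.symm
  · intro w t ht
    exact SylvAux.shape_P_eq w t ht
end

section
/- For a permutation σ of {1,...,n}, the shape of the binary search tree P(σ) (obtained by right-to-left insertion) equals the shape of the decreasing tree T(σ^{-1}). -/
namespace SylvProof

open Sylv

lemma map_fst_filter (qb : ℕ × ℕ → Bool) (l : List (ℕ × ℕ)) (q2 : ℕ → Bool)
    (hq : ∀ p, qb p = q2 p.1) :
    (l.filter qb).map Prod.fst = (l.map Prod.fst).filter q2 := by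
  induction l with
  | nil => simp
  | cons x xs ih =>
    by_cases h : q2 x.1 <;> simp [List.filter_cons, h, ih, hq x]

lemma foldr_ins (a : ℕ) (u : List ℕ) (L R : BinaryTree ℕ) :
    u.foldr Sylv.insert (BinaryTree.node a L R) =
      BinaryTree.node a ((u.filter (· ≤ a)).foldr Sylv.insert L)
        ((u.filter fun x => !(x ≤ a : Bool)).foldr Sylv.insert R) := by
  induction u with
  | nil => simp
  | cons x xs ih =>
    by_cases h : x ≤ a <;>
      simp [List.filter_cons, h, ih, Sylv.insert]

lemma inorder_eq_nil {t : BinaryTree ℕ} (h : Sylv.inorder t = []) : t = BinaryTree.nil := by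
  cases t with
  | nil => rfl
  | node a l r => simp [Sylv.inorder] at h

/-- `τ` reads the positions of `σ`'s letters in increasing value order (up to
order isomorphism on both sides), encoded by a common list of pairs. -/
def Corr (σ τ : List ℕ) : Prop :=
  ∃ l s : List (ℕ × ℕ), List.Perm l s ∧ σ = l.map Prod.fst ∧ τ = s.map Prod.snd ∧
    (l.map Prod.snd).Pairwise (· < ·) ∧ (s.map Prod.fst).Pairwise (· < ·)

lemma main : ∀ (N : ℕ) (σ τ : List ℕ) (t : BinaryTree ℕ), σ.length ≤ N → Corr σ τ →
    Sylv.IsDecreasing t → Sylv.inorder t = τ → Sylv.shape (Sylv.P σ) = Sylv.shape t := by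
  intro N
  induction N with
  | zero =>
    rintro σ τ t hlen ⟨l, s, hls, hσ, hτ, -, -⟩ hdec hin
    have hσnil : σ = [] := List.length_eq_zero_iff.mp (Nat.le_zero.mp hlen)
    subst hσnil
    have hl : l = [] := by
      have := congrArg List.length hσ; simpa using this.symm
    subst hl
    have hs : s = [] := by
      have := hls.length_eq; simpa using this.symm
    subst hs
    have ht : t = BinaryTree.nil := inorder_eq_nil (by rw [hin, hτ]; rfl)
    subst ht
    rfl
  | succ N ih =>
    rintro σ τ t hlen ⟨l, s, hls, hσ, hτ, hsndl, hfsts⟩ hdec hin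
    rcases List.eq_nil_or_concat σ with rfl | ⟨u, a, hσc⟩
    · -- empty case again
      have hl : l = [] := by
        have := congrArg List.length hσ; simpa using this.symm
      subst hl
      have hs : s = [] := by
        have := hls.length_eq; simpa using this.symm
      subst hs
      have ht : t = BinaryTree.nil := inorder_eq_nil (by rw [hin, hτ]; rfl)
      subst ht
      rfl
    · rw [List.concat_eq_append] at hσc
      subst hσc
      -- decompose l
      obtain ⟨l₁, l₂, hlsplit, hl₁, hl₂⟩ := List.map_eq_append_iff.mp hσ.symm
      obtain ⟨pa, l₂', hl₂split, hpa1, hl₂'⟩ := List.map_eq_cons_iff.mp hl₂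
      have hl₂'nil : l₂' = [] := List.map_eq_nil_iff.mp hl₂'
      subst hl₂'nil
      subst hl₂split
      subst hlsplit
      set m := pa.2 with hm
      -- snd of l₁ all below m
      have hsndl' : ((l₁.map Prod.snd) ++ [m]).Pairwise (· < ·) := by
        simpa using hsndl
      have hmmax : ∀ x ∈ l₁.map Prod.snd, x < m := by
        intro x hx
        exact (List.pairwise_append.mp hsndl').2.2 x hx m (List.mem_singleton_self m)
      -- t is a node
      cases t with
      | nil =>
        exfalso
        have h0 : τ = [] := by rw [← hin]; rfl
        rw [h0] at hτ
        have hse : s = [] := List.map_eq_nil_iff.mp hτ.symm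
        have hle := hls.length_eq
        rw [hse] at hle
        simp at hle
      | node b tl tr =>
        obtain ⟨hbl, hbr, hdl, hdr⟩ := hdec
        have hin' : Sylv.inorder tl ++ b :: Sylv.inorder tr = s.map Prod.snd := by
          rw [← hτ, ← hin]; rfl
        -- b = m
        have hpermsnd : List.Perm (l₁.map Prod.snd ++ [m]) (s.map Prod.snd) := by
          simpa using hls.map Prod.snd
        have hbm : b = m := by
          by_contra hne
          have hbτ : b ∈ s.map Prod.snd := by
            rw [← hin']; exact List.mem_append_right _ (List.mem_cons_self (a := b))
          have hbl' : b ∈ l₁.map Prod.snd ++ [m] := hpermsnd.mem_iff.mpr hbτ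
          have hblt : b < m := by
            rcases List.mem_append.mp hbl' with h | h
            · exact hmmax b h
            · simp at h; exact absurd h hne
          have hmτ : m ∈ Sylv.inorder tl ++ b :: Sylv.inorder tr := by
            rw [hin']
            exact hpermsnd.mem_iff.mp (List.mem_append_right _ (List.mem_singleton_self m))
          have hmlt : m < b := by
            rcases List.mem_append.mp hmτ with h | h
            · exact hbl m h
            · rcases List.mem_cons.mp h with h | h
              · exact absurd h.symm hne
              · exact hbr m h
          omega
        subst hbm
        -- split s at the occurrence of m
        obtain ⟨s1, s2', hssplit, hs1, hs2'⟩ :=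
          List.map_eq_append_iff.mp hin'.symm
        obtain ⟨p, s2, hs2split, hp2, hs2⟩ := List.map_eq_cons_iff.mp hs2'
        subst hs2split
        subst hssplit
        -- p = pa
        have hppa : p = pa := by
          have hpl : p ∈ l₁ ++ [pa] :=
            hls.symm.subset (List.mem_append_right _ (List.mem_cons_self (a := p)))
          rcases List.mem_append.mp hpl with h | h
          · exfalso
            have : p.2 < m := hmmax p.2 (List.mem_map_of_mem (f := Prod.snd) h)
            omega
          · simpa using h
        -- fst bounds from sortedness of s
        have hfsts' : (s1.map Prod.fst ++ p.1 :: s2.map Prod.fst).Pairwise (· < ·) := by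
          simpa using hfsts
        have hfa1 : ∀ q ∈ s1, q.1 < a := by
          intro q hq
          have := (List.pairwise_append.mp hfsts').2.2 q.1
            (List.mem_map_of_mem (f := Prod.fst) hq) p.1 List.mem_cons_self
          rwa [hppa, hpa1] at this
        have hfa2 : ∀ q ∈ s2, a < q.1 := by
          intro q hq
          have := (List.pairwise_cons.mp (List.pairwise_append.mp hfsts').2.1).1 q.1
            (List.mem_map_of_mem (f := Prod.fst) hq)
          rwa [hppa, hpa1] at this
        -- a ∉ u
        have hσnodup : (u ++ [a]).Nodup := by
          have h1 : ((l₁ ++ [pa]).map Prod.fst).Nodup := by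
            refine ((hls.map Prod.fst).nodup_iff).mpr ?_
            exact hfsts.imp (fun h => ne_of_lt h)
          rwa [← hσ] at h1
        have hanotu : a ∉ u := by
          intro h
          have := List.disjoint_of_nodup_append hσnodup
          exact this h (List.mem_singleton_self a)
        -- P decomposition
        have hP : Sylv.P (u ++ [a]) = BinaryTree.node a (Sylv.P (u.filter (· ≤ a)))
            (Sylv.P (u.filter fun x => !(x ≤ a : Bool))) := by
          show (u ++ [a]).foldr Sylv.insert BinaryTree.nil = _
          rw [List.foldr_append]
          exact foldr_ins a u BinaryTree.nil BinaryTree.nil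
        -- filter identities
        have hfil1 : u.filter (· ≤ a) = (l₁.filter fun q => (q.1 < a : Bool)).map Prod.fst := by
          rw [map_fst_filter _ l₁ (fun x => (x < a : Bool)) (fun p => rfl), hl₁]
          refine List.filter_congr ?_
          intro x hx
          have hxa : x ≠ a := fun h => hanotu (h ▸ hx)
          simp only [decide_eq_decide]
          omega
        have hfil2 : (u.filter fun x => !(x ≤ a : Bool)) =
            (l₁.filter fun q => (a < q.1 : Bool)).map Prod.fst := by
          rw [map_fst_filter _ l₁ (fun x => (a < x : Bool)) (fun p => rfl), hl₁]
          refine List.filter_congr ?_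
          intro x hx
          by_cases h : x ≤ a <;> simp [h] <;> omega
        -- perms for the two sides
        have hpl : List.Perm (l₁.filter fun q => (q.1 < a : Bool)) s1 := by
          have h := hls.filter (fun q => (q.1 < a : Bool))
          rw [List.filter_append, List.filter_append] at h
          have e1 : ([pa].filter fun q => (q.1 < a : Bool)) = [] := by
            simp [List.filter_cons, hpa1]
          have e2 : (s1.filter fun q => (q.1 < a : Bool)) = s1 :=
            List.filter_eq_self.mpr (fun q hq => by simpa using hfa1 q hq)
          have e3 : ((p :: s2).filter fun q => (q.1 < a : Bool)) = [] := by
            refine List.filter_eq_nil_iff.mpr ?_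
            intro q hq
            rcases List.mem_cons.mp hq with h' | h'
            · subst h'; simp [hppa, hpa1]
            · have := hfa2 q h'; simp; omega
          rw [e1, e2, e3, List.append_nil, List.append_nil] at h
          exact h
        have hpr : List.Perm (l₁.filter fun q => (a < q.1 : Bool)) s2 := by
          have h := hls.filter (fun q => (a < q.1 : Bool))
          rw [List.filter_append, List.filter_append] at h
          have e1 : ([pa].filter fun q => (a < q.1 : Bool)) = [] := by
            simp [List.filter_cons, hpa1]
          have e2 : (s1.filter fun q => (a < q.1 : Bool)) = [] := by
            refine List.filter_eq_nil_iff.mpr ?_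
            intro q hq
            have := hfa1 q hq; simp; omega
          have e3 : ((p :: s2).filter fun q => (a < q.1 : Bool)) = s2 := by
            rw [List.filter_cons]
            have : ¬ (a < p.1) := by rw [hppa, hpa1]; omega
            simp only [this, decide_false, if_neg]
            · exact List.filter_eq_self.mpr (fun q hq => by simpa using hfa2 q hq)
          rw [e1, e2, e3, List.append_nil] at h
          simpa using h
        -- sortedness for the two sides
        have hsl1 : ((l₁.filter fun q => (q.1 < a : Bool)).map Prod.snd).Pairwise (· < ·) := by
          have h1 : (l₁.map Prod.snd).Pairwise (· < ·) :=
            hsndl'.sublist ((List.sublist_append_left _ _))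
          exact h1.sublist ((List.filter_sublist (l := l₁)).map Prod.snd)
        have hsl2 : ((l₁.filter fun q => (a < q.1 : Bool)).map Prod.snd).Pairwise (· < ·) := by
          have h1 : (l₁.map Prod.snd).Pairwise (· < ·) :=
            hsndl'.sublist ((List.sublist_append_left _ _))
          exact h1.sublist ((List.filter_sublist (l := l₁)).map Prod.snd)
        have hss1 : (s1.map Prod.fst).Pairwise (· < ·) :=
          hfsts.sublist ((List.sublist_append_left s1 (p :: s2)).map Prod.fst)
        have hss2 : (s2.map Prod.fst).Pairwise (· < ·) := by
          refine hfsts.sublist (List.Sublist.map Prod.fst ?_)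
          exact ((List.sublist_cons_self p s2).trans (List.sublist_append_right s1 (p :: s2)))
        -- lengths
        have hlu : u.length = l₁.length := by rw [← hl₁]; simp
        have hlen' : u.length ≤ N := by
          have h := hlen; rw [List.length_append] at h; simp at h; omega
        -- apply IH
        have ihl : Sylv.shape (Sylv.P (u.filter (· ≤ a))) = Sylv.shape tl := by
          refine ih _ (s1.map Prod.snd) tl ?_ ⟨_, s1, hpl, hfil1, rfl, hsl1, hss1⟩ hdl hs1.symm
          calc (u.filter (· ≤ a)).length ≤ u.length := u.length_filter_le _
            _ ≤ N := hlen'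
        have ihr : Sylv.shape (Sylv.P (u.filter fun x => !(x ≤ a : Bool))) = Sylv.shape tr := by
          refine ih _ (s2.map Prod.snd) tr ?_ ⟨_, s2, hpr, hfil2, rfl, hsl2, hss2⟩ hdr hs2.symm
          calc (u.filter fun x => !(x ≤ a : Bool)).length ≤ u.length := u.length_filter_le _
            _ ≤ N := hlen'
        rw [hP]
        show BinaryTree.node () _ _ = BinaryTree.node () _ _
        rw [ihl, ihr]

end SylvProof

/-- for a permutation `σ`, the shape of `P(σ)` is the shape of the
decreasing tree `T(σ⁻¹)`. -/
theorem stmt9 (n : ℕ) (σ : List ℕ) (hσ : Sylv.IsPermWord n σ)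
    (t : BinaryTree ℕ) (ht : Sylv.IsDecrTreeOf (Sylv.invPerm σ) t) :
    Sylv.shape (Sylv.P σ) = Sylv.shape t := by
  obtain ⟨hdec, hin⟩ := ht
  have hσ' : List.Perm σ (List.range' 1 n) := hσ
  have hlen : σ.length = n := by rw [hσ'.length_eq, List.length_range']
  have hrnodup : (List.range' 1 n).Nodup := List.nodup_range' (s := 1) (n := n)
  have hnodup : σ.Nodup := hσ'.nodup_iff.mpr hrnodup
  have hlfst : (σ.zip (List.range' 1 σ.length)).map Prod.fst = σ :=
    List.map_fst_zip (by simp)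
  have hlsnd : (σ.zip (List.range' 1 σ.length)).map Prod.snd = List.range' 1 σ.length :=
    List.map_snd_zip (by simp)
  have hssnd : (((List.range σ.length).map
      (fun j => ((j + 1 : ℕ), σ.idxOf (j + 1) + 1))).map Prod.snd) = Sylv.invPerm σ := by
    rw [List.map_map]; rfl
  have hsfst : (((List.range σ.length).map
      (fun j => ((j + 1 : ℕ), σ.idxOf (j + 1) + 1))).map Prod.fst) =
      (List.range σ.length).map (· + 1) := by
    rw [List.map_map]; rfl
  have hsortl : ((σ.zip (List.range' 1 σ.length)).map Prod.snd).Pairwise (· < ·) := by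
    rw [hlsnd]; exact List.pairwise_lt_range' (s := 1) (n := σ.length)
  have hsorts : (((List.range σ.length).map
      (fun j => ((j + 1 : ℕ), σ.idxOf (j + 1) + 1))).map Prod.fst).Pairwise (· < ·) := by
    rw [hsfst]
    exact List.Pairwise.map _ (fun {a b} h => by omega) (List.pairwise_lt_range (n := σ.length))
  have hlnodup : (σ.zip (List.range' 1 σ.length)).Nodup := by
    refine List.Nodup.of_map Prod.snd ?_
    rw [hlsnd]; exact List.nodup_range' (s := 1) (n := σ.length)
  have hsub : σ.zip (List.range' 1 σ.length) ⊆
      (List.range σ.length).map (fun j => ((j + 1 : ℕ), σ.idxOf (j + 1) + 1)) := by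
    intro x hx
    obtain ⟨i, hi, rfl⟩ := List.mem_iff_getElem.mp hx
    have hil : i < σ.length := by simp at hi; omega
    have hgz : (σ.zip (List.range' 1 σ.length))[i] = (σ[i]'hil, 1 + i) := by
      rw [List.getElem_zip]
      congr 1
      simp [List.getElem_range'_1]
    have hmem : σ[i]'hil ∈ List.range' 1 n := hσ'.subset (List.getElem_mem _)
    have hrange : 1 ≤ σ[i]'hil ∧ σ[i]'hil < 1 + n := List.mem_range'_1.mp hmem
    rw [hgz]
    refine List.mem_map.mpr ⟨σ[i]'hil - 1, List.mem_range.mpr (by omega), ?_⟩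
    have h1 : σ[i]'hil - 1 + 1 = σ[i]'hil := by omega
    rw [h1]
    have h2 : σ.idxOf (σ[i]'hil) = i := hnodup.idxOf_getElem i hil
    rw [h2]
    simp [Prod.ext_iff]; omega
  have hlenls : ((List.range σ.length).map
      (fun j => ((j + 1 : ℕ), σ.idxOf (j + 1) + 1))).length ≤
      (σ.zip (List.range' 1 σ.length)).length := by simp
  have hperm := (hlnodup.subperm hsub).perm_of_length_le hlenls
  exact SylvProof.main σ.length σ (Sylv.invPerm σ) t le_rfl
    ⟨_, _, hperm, hlfst.symm, hssnd.symm, hsortl, hsorts⟩ hdec hin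
end
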